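/- Fix α, β ∈ ℝ\{0\}, μ > 0 with Δ = α²+β²−4μ² > 0, and real y1, y2 (affine functions of (t,x) with unit x-slope). Define f(x) = cosh(βy2) − (2βμ/(α√(α²+β²)√Δ))(α cos(αy1) − β sin(αy1)) and g(x) = (β√(α²+β²)/(α√Δ)) sin(αy1) − (2βμ/Δ)e^{βy2}, and set B = 2(g_x f − f_x g)/(f² + g²). Then B satisfies the pointwise identity B² = ∂_x² log(f² + g²) − 2μB. -/

import Mathlib

/-- The denominator profile `F_μ` of the 5th-order Gardner breather at fixed time,
with `y1 = x + c1`, `y2 = x + c2`. -/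
noncomputable def breatherF (α β μ c1 c2 : ℝ) (x : ℝ) : ℝ :=
  Real.cosh (β * (x + c2))
    - (2 * β * μ / (α * Real.sqrt (α^2 + β^2) * Real.sqrt (α^2 + β^2 - 4*μ^2)))
      * (α * Real.cos (α * (x + c1)) - β * Real.sin (α * (x + c1)))

/-- The numerator profile `G_μ` of the 5th-order Gardner breather at fixed time. -/
noncomputable def breatherG (α β μ c1 c2 : ℝ) (x : ℝ) : ℝ :=
  (β * Real.sqrt (α^2 + β^2) / (α * Real.sqrt (α^2 + β^2 - 4*μ^2)))
      * Real.sin (α * (x + c1))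
    - (2 * β * μ / (α^2 + β^2 - 4*μ^2)) * Real.exp (β * (x + c2))

/-- The breather profile `B = 2 (g_x f - f_x g)/(f² + g²)`. -/
noncomputable def breatherB (α β μ c1 c2 : ℝ) (x : ℝ) : ℝ :=
  2 * (deriv (breatherG α β μ c1 c2) x * breatherF α β μ c1 c2 x
        - deriv (breatherF α β μ c1 c2) x * breatherG α β μ c1 c2 x)
    / ((breatherF α β μ c1 c2 x)^2 + (breatherG α β μ c1 c2 x)^2)

/-! With `D = f² + g²` and `W = g' f - f' g`, Lagrange's identity
`(f f' + g g')² + W² = D (f'² + g'²)` gives `(log D)'' = (2W/D)² + 2 (f f'' - f'² + g g'' - g'²)/D`,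
so the claimed identity is equivalent to the Hirota-type bilinear equation
`f f'' - f'² + g g'' - g'² = 2μW`. For `F = cosh η - k (α cos θ - β sin θ)` and
`G = p sin θ - q e^η` this equation reduces, via `cos² + sin² = 1`, `cosh² - sinh² = 1` and
`e^η = cosh η + sinh η`, to the relations `k (α² + β²) = 2μp`, `q Δ = 2βμ` and
`(pα)² = β² + 2βμq`, which the breather's coefficients satisfy. -/

theorem hasDerivAt_mul_add_const (a c x : ℝ) : HasDerivAt (fun y => a * (y + c)) a x := by
  simpa using ((hasDerivAt_id x).add_const c).const_mul a

section LogSumSquares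

variable {f g : ℝ → ℝ}

theorem deriv_log_sq_add_sq (hf : Differentiable ℝ f) (hg : Differentiable ℝ g)
    (hD : ∀ y, 0 < f y ^ 2 + g y ^ 2) :
    deriv (fun y => Real.log (f y ^ 2 + g y ^ 2))
      = fun y => 2 * (f y * deriv f y + g y * deriv g y) / (f y ^ 2 + g y ^ 2) := by
  funext y
  have hsum : HasDerivAt (fun y => f y ^ 2 + g y ^ 2)
      (2 * (f y * deriv f y + g y * deriv g y)) y :=
    (((hf y).hasDerivAt.pow 2).add ((hg y).hasDerivAt.pow 2)).congr_deriv (by push_cast; ring)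
  exact (hsum.log (hD y).ne').deriv

theorem deriv_deriv_log_sq_add_sq {x : ℝ} (hf : Differentiable ℝ f) (hg : Differentiable ℝ g)
    (hf' : DifferentiableAt ℝ (deriv f) x) (hg' : DifferentiableAt ℝ (deriv g) x)
    (hD : ∀ y, 0 < f y ^ 2 + g y ^ 2) :
    deriv (deriv fun y => Real.log (f y ^ 2 + g y ^ 2)) x
      = (2 * (deriv g x * f x - deriv f x * g x) / (f x ^ 2 + g x ^ 2)) ^ 2
        + 2 * (f x * deriv (deriv f) x - deriv f x ^ 2 + (g x * deriv (deriv g) x - deriv g x ^ 2))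
          / (f x ^ 2 + g x ^ 2) := by
  have hnum : HasDerivAt (fun y => 2 * (f y * deriv f y + g y * deriv g y))
      (2 * (deriv f x * deriv f x + f x * deriv (deriv f) x
        + (deriv g x * deriv g x + g x * deriv (deriv g) x))) x :=
    (((hf x).hasDerivAt.mul hf'.hasDerivAt).add ((hg x).hasDerivAt.mul hg'.hasDerivAt)).const_mul 2
  have hden : HasDerivAt (fun y => f y ^ 2 + g y ^ 2)
      (2 * (f x * deriv f x + g x * deriv g x)) x :=
    (((hf x).hasDerivAt.pow 2).add ((hg x).hasDerivAt.pow 2)).congr_deriv (by push_cast; ring)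
  rw [deriv_log_sq_add_sq hf hg hD]
  refine (hnum.div hden (hD x).ne').deriv.trans ?_
  field_simp
  ring

theorem sq_eq_deriv_deriv_log_sub_of_bilinear {μ x : ℝ} (hf : Differentiable ℝ f)
    (hg : Differentiable ℝ g) (hf' : DifferentiableAt ℝ (deriv f) x)
    (hg' : DifferentiableAt ℝ (deriv g) x) (hD : ∀ y, 0 < f y ^ 2 + g y ^ 2)
    (hbil : f x * deriv (deriv f) x - deriv f x ^ 2 + (g x * deriv (deriv g) x - deriv g x ^ 2)
      = 2 * μ * (deriv g x * f x - deriv f x * g x)) :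
    (2 * (deriv g x * f x - deriv f x * g x) / (f x ^ 2 + g x ^ 2)) ^ 2
      = deriv (deriv fun y => Real.log (f y ^ 2 + g y ^ 2)) x
        - 2 * μ * (2 * (deriv g x * f x - deriv f x * g x) / (f x ^ 2 + g x ^ 2)) := by
  rw [deriv_deriv_log_sq_add_sq hf hg hf' hg' hD, hbil]
  ring

end LogSumSquares

namespace Breather

section Coefficients

noncomputable def coeffK (α β μ : ℝ) : ℝ :=
  2 * β * μ / (α * Real.sqrt (α ^ 2 + β ^ 2) * Real.sqrt (α ^ 2 + β ^ 2 - 4 * μ ^ 2))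

noncomputable def coeffP (α β μ : ℝ) : ℝ :=
  β * Real.sqrt (α ^ 2 + β ^ 2) / (α * Real.sqrt (α ^ 2 + β ^ 2 - 4 * μ ^ 2))

noncomputable def coeffQ (α β μ : ℝ) : ℝ :=
  2 * β * μ / (α ^ 2 + β ^ 2 - 4 * μ ^ 2)

variable {α β μ : ℝ}

theorem coeffK_mul (hα : α ≠ 0) : coeffK α β μ * (α ^ 2 + β ^ 2) = 2 * μ * coeffP α β μ := by
  have hS : 0 < α ^ 2 + β ^ 2 := by positivity
  rw [coeffK, coeffP]
  set S := Real.sqrt (α ^ 2 + β ^ 2)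
  set T := Real.sqrt (α ^ 2 + β ^ 2 - 4 * μ ^ 2)
  have hS2 : S ^ 2 = α ^ 2 + β ^ 2 := Real.sq_sqrt hS.le
  have hS0 : S ≠ 0 := (Real.sqrt_pos.mpr hS).ne'
  rw [← hS2]
  field_simp

theorem coeffQ_mul (hΔ : α ^ 2 + β ^ 2 - 4 * μ ^ 2 ≠ 0) :
    coeffQ α β μ * (α ^ 2 + β ^ 2 - 4 * μ ^ 2) = 2 * β * μ :=
  div_mul_cancel₀ _ hΔ

theorem coeffP_mul_sq (hα : α ≠ 0) (hΔ : 0 < α ^ 2 + β ^ 2 - 4 * μ ^ 2) :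
    (coeffP α β μ * α) ^ 2 = β ^ 2 + 2 * β * μ * coeffQ α β μ := by
  rw [coeffP, coeffQ]
  set S := Real.sqrt (α ^ 2 + β ^ 2)
  set T := Real.sqrt (α ^ 2 + β ^ 2 - 4 * μ ^ 2)
  have hS2 : S ^ 2 = α ^ 2 + β ^ 2 := Real.sq_sqrt (by positivity)
  have hT2 : T ^ 2 = α ^ 2 + β ^ 2 - 4 * μ ^ 2 := Real.sq_sqrt hΔ.le
  have hT0 : T ≠ 0 := (Real.sqrt_pos.mpr hΔ).ne'
  rw [← hT2]
  field_simp
  rw [hS2, hT2]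
  ring

end Coefficients

section Profiles

variable (α β c1 c2 : ℝ)

noncomputable def F (k x : ℝ) : ℝ :=
  Real.cosh (β * (x + c2)) - k * (α * Real.cos (α * (x + c1)) - β * Real.sin (α * (x + c1)))

noncomputable def G (p q x : ℝ) : ℝ :=
  p * Real.sin (α * (x + c1)) - q * Real.exp (β * (x + c2))

theorem hasDerivAt_F (k x : ℝ) :
    HasDerivAt (F α β c1 c2 k)
      (β * Real.sinh (β * (x + c2))
        + k * α * (α * Real.sin (α * (x + c1)) + β * Real.cos (α * (x + c1)))) x := by
  have hcosh := (Real.hasDerivAt_cosh _).comp x (hasDerivAt_mul_add_const β c2 x)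
  have hcos := (Real.hasDerivAt_cos _).comp x (hasDerivAt_mul_add_const α c1 x)
  have hsin := (Real.hasDerivAt_sin _).comp x (hasDerivAt_mul_add_const α c1 x)
  exact (hcosh.sub (((hcos.const_mul α).sub (hsin.const_mul β)).const_mul k)).congr_deriv
    (by ring)

theorem hasDerivAt_deriv_F (k x : ℝ) :
    HasDerivAt (deriv (F α β c1 c2 k))
      (β ^ 2 * Real.cosh (β * (x + c2))
        + k * α ^ 2 * (α * Real.cos (α * (x + c1)) - β * Real.sin (α * (x + c1)))) x := by
  rw [show deriv (F α β c1 c2 k) = _ from funext fun y => (hasDerivAt_F α β c1 c2 k y).deriv]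
  have hsinh := (Real.hasDerivAt_sinh _).comp x (hasDerivAt_mul_add_const β c2 x)
  have hcos := (Real.hasDerivAt_cos _).comp x (hasDerivAt_mul_add_const α c1 x)
  have hsin := (Real.hasDerivAt_sin _).comp x (hasDerivAt_mul_add_const α c1 x)
  exact ((hsinh.const_mul β).add (((hsin.const_mul α).add (hcos.const_mul β)).const_mul
    (k * α))).congr_deriv (by ring)

theorem hasDerivAt_G (p q x : ℝ) :
    HasDerivAt (G α β c1 c2 p q)
      (p * α * Real.cos (α * (x + c1)) - q * β * Real.exp (β * (x + c2))) x := by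
  have hsin := (Real.hasDerivAt_sin _).comp x (hasDerivAt_mul_add_const α c1 x)
  have hexp := (Real.hasDerivAt_exp _).comp x (hasDerivAt_mul_add_const β c2 x)
  exact ((hsin.const_mul p).sub (hexp.const_mul q)).congr_deriv (by ring)

theorem hasDerivAt_deriv_G (p q x : ℝ) :
    HasDerivAt (deriv (G α β c1 c2 p q))
      (-(p * α ^ 2 * Real.sin (α * (x + c1))) - q * β ^ 2 * Real.exp (β * (x + c2))) x := by
  rw [show deriv (G α β c1 c2 p q) = _ from funext fun y => (hasDerivAt_G α β c1 c2 p q y).deriv]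
  have hcos := (Real.hasDerivAt_cos _).comp x (hasDerivAt_mul_add_const α c1 x)
  have hexp := (Real.hasDerivAt_exp _).comp x (hasDerivAt_mul_add_const β c2 x)
  exact ((hcos.const_mul (p * α)).sub (hexp.const_mul (q * β))).congr_deriv (by ring)

theorem bilinear_identity {μ k p q : ℝ} (hS : α ^ 2 + β ^ 2 ≠ 0)
    (hk : k * (α ^ 2 + β ^ 2) = 2 * μ * p) (hq : q * (α ^ 2 + β ^ 2 - 4 * μ ^ 2) = 2 * β * μ)
    (hp : (p * α) ^ 2 = β ^ 2 + 2 * β * μ * q) (x : ℝ) :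
    F α β c1 c2 k x * deriv (deriv (F α β c1 c2 k)) x - deriv (F α β c1 c2 k) x ^ 2
        + (G α β c1 c2 p q x * deriv (deriv (G α β c1 c2 p q)) x
          - deriv (G α β c1 c2 p q) x ^ 2)
      = 2 * μ * (deriv (G α β c1 c2 p q) x * F α β c1 c2 k x
          - deriv (F α β c1 c2 k) x * G α β c1 c2 p q x) := by
  have hr : q * (p - 2 * μ * k) = k * β :=
    mul_left_cancel₀ hS (by linear_combination p * hq + (-2 * μ * q - β) * hk)
  rw [(hasDerivAt_F α β c1 c2 k x).deriv, (hasDerivAt_deriv_F α β c1 c2 k x).deriv,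
    (hasDerivAt_G α β c1 c2 p q x).deriv, (hasDerivAt_deriv_G α β c1 c2 p q x).deriv]
  simp only [F, G]
  rw [← Real.cosh_add_sinh]
  set c := Real.cos (α * (x + c1))
  set s := Real.sin (α * (x + c1))
  set ch := Real.cosh (β * (x + c2))
  set sh := Real.sinh (β * (x + c2))
  linear_combination
    (-(k ^ 2 * α ^ 2 * (α ^ 2 + β ^ 2)) - p ^ 2 * α ^ 2 + 2 * μ * p * k * α ^ 2)
        * Real.cos_sq_add_sin_sq (α * (x + c1))
      + (β ^ 2 + 2 * μ * q * β) * Real.cosh_sq_sub_sinh_sq (β * (x + c2))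
      - hp + (α * c * ch - β * s * sh - k * α ^ 2) * hk
      + (ch + sh) * ((α ^ 2 - β ^ 2) * s + 2 * α * β * c) * hr

end Profiles

end Breather

theorem matsuno_identity_general (α β μ c1 c2 : ℝ) (hα : α ≠ 0)
    (hΔ : 0 < α^2 + β^2 - 4*μ^2)
    (hpos : ∀ x, 0 < (breatherF α β μ c1 c2 x)^2 + (breatherG α β μ c1 c2 x)^2) :
    ∀ x : ℝ,
      (breatherB α β μ c1 c2 x)^2
        = deriv (deriv (fun y =>
            Real.log ((breatherF α β μ c1 c2 y)^2 + (breatherG α β μ c1 c2 y)^2))) x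
          - 2 * μ * breatherB α β μ c1 c2 x := by
  intro x
  -- `breatherF = Breather.F α β c1 c2 (coeffK α β μ)` and
  -- `breatherG = Breather.G α β c1 c2 (coeffP α β μ) (coeffQ α β μ)` by definition.
  exact sq_eq_deriv_deriv_log_sub_of_bilinear
    (fun y => (Breather.hasDerivAt_F α β c1 c2 _ y).differentiableAt)
    (fun y => (Breather.hasDerivAt_G α β c1 c2 _ _ y).differentiableAt)
    (Breather.hasDerivAt_deriv_F α β c1 c2 _ x).differentiableAt
    (Breather.hasDerivAt_deriv_G α β c1 c2 _ _ x).differentiableAt hpos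
    (Breather.bilinear_identity α β c1 c2 (by positivity) (Breather.coeffK_mul hα)
      (Breather.coeffQ_mul hΔ.ne') (Breather.coeffP_mul_sq hα hΔ) x)

theorem matsuno_identity (α β μ c1 c2 : ℝ) (hα : α ≠ 0) (hβ : β ≠ 0) (hμ : 0 < μ)
    (hΔ : 0 < α^2 + β^2 - 4*μ^2)
    (hpos : ∀ x, 0 < (breatherF α β μ c1 c2 x)^2 + (breatherG α β μ c1 c2 x)^2) :
    ∀ x : ℝ,
      (breatherB α β μ c1 c2 x)^2
        = deriv (deriv (fun y =>
            Real.log ((breatherF α β μ c1 c2 y)^2 + (breatherG α β μ c1 c2 y)^2))) x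
          - 2 * μ * breatherB α β μ c1 c2 x :=
  matsuno_identity_general α β μ c1 c2 hα hΔ hpos
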